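/- Let A be a Poisson algebra over a commutative ring R, n : ℕ, H : Fin n → A, f : Fin n → Fin n → Fin n → A, with X_i(g) = {g, H i}, anchor ρ₁ and bracket ⟦·,·⟧₁ defined as in the context (no involution relation between the H i is needed). Then the Leibniz rule holds: for all s₁, s₂ : Fin n → A and all g ∈ A, ⟦s₁, g·s₂⟧₁ = g·⟦s₁, s₂⟧₁ + (ρ₁(s₁)(g))·s₂, where (g·s)(k) = g*(s k) componentwise. -/
import Mathlib

open Finset

/-- A Poisson bracket on a commutative `R`-algebra `A`: an `R`-bilinear bracket which is
alternating, satisfies the Jacobi identity and the Leibniz rule. -/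
structure PoissonBracket (R A : Type*) [CommRing R] [CommRing A] [Algebra R A] where
  bracket : A →ₗ[R] A →ₗ[R] A
  alternating : ∀ a : A, bracket a a = 0
  jacobi : ∀ a b c : A,
    bracket a (bracket b c) + bracket b (bracket c a) + bracket c (bracket a b) = 0
  leibniz : ∀ a b c : A, bracket a (b * c) = bracket a b * c + b * bracket a c

variable {R A : Type*} [CommRing R] [CommRing A] [Algebra R A]

/-- The hamiltonian derivation of the `i`-th constraint: `X i g = {g, H i}`. -/
def Xham (P : PoissonBracket R A) {n : ℕ} (H : Fin n → A) (i : Fin n) (g : A) : A :=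
  P.bracket g (H i)

/-- The anchor `ρ₁`: it sends a section `s : Fin n → A` to the derivation
`g ↦ ∑ i, (s i) * X i g`. -/
def rho1 (P : PoissonBracket R A) {n : ℕ} (H : Fin n → A) (s : Fin n → A) (g : A) : A :=
  ∑ i, s i * Xham P H i g

/-- The bracket `⟦s₁, s₂⟧₁`, with `k`-th component
`∑ i j, f i j k * s₁ i * s₂ j + ∑ i, s₁ i * X i (s₂ k) - ∑ i, s₂ i * X i (s₁ k)`. -/
def brk1 (P : PoissonBracket R A) {n : ℕ} (H : Fin n → A) (f : Fin n → Fin n → Fin n → A)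
    (s₁ s₂ : Fin n → A) (k : Fin n) : A :=
  (∑ i, ∑ j, f i j k * s₁ i * s₂ j) + (∑ i, s₁ i * Xham P H i (s₂ k))
    - ∑ i, s₂ i * Xham P H i (s₁ k)

lemma bracket_antisymm (P : PoissonBracket R A) (a b : A) :
    P.bracket a b = - P.bracket b a := by
  have h := P.alternating (a + b)
  simp only [map_add, LinearMap.add_apply, P.alternating] at h
  linear_combination h

lemma bracket_mul_left (P : PoissonBracket R A) (a b c : A) :
    P.bracket (b * c) a = P.bracket b a * c + b * P.bracket c a := by
  rw [bracket_antisymm P (b*c) a, P.leibniz, bracket_antisymm P a b,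
    bracket_antisymm P a c]
  ring

/-- the Leibniz rule for the anchor `ρ₁` and bracket `⟦·,·⟧₁`
(no involution relation among the `H i` is needed). -/
theorem brk1_leibniz (P : PoissonBracket R A) (n : ℕ) (H : Fin n → A)
    (f : Fin n → Fin n → Fin n → A) :
    ∀ (s₁ s₂ : Fin n → A) (g : A) (k : Fin n),
      brk1 P H f s₁ (fun i => g * s₂ i) k
        = g * brk1 P H f s₁ s₂ k + rho1 P H s₁ g * s₂ k := by
  intro s₁ s₂ g k
  simp only [brk1, rho1, Xham, bracket_mul_left, Finset.sum_mul, Finset.mul_sum,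
    mul_add, Finset.sum_add_distrib, mul_sub, Finset.sum_sub_distrib]
  have e1 : ∀ x y : Fin n, f x y k * s₁ x * (g * s₂ y) = g * (f x y k * s₁ x * s₂ y) :=
    fun x y => by ring
  have e2 : ∀ x, s₁ x * (P.bracket g (H x) * s₂ k) = s₁ x * P.bracket g (H x) * s₂ k :=
    fun x => by ring
  have e3 : ∀ x, s₁ x * (g * P.bracket (s₂ k) (H x)) = g * (s₁ x * P.bracket (s₂ k) (H x)) :=
    fun x => by ring
  have e4 : ∀ x, g * s₂ x * P.bracket (s₁ k) (H x) = g * (s₂ x * P.bracket (s₁ k) (H x)) :=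
    fun x => by ring
  simp only [e1, e2, e3, e4]
  abel
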